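/- arXiv:2111.03936 — 2 statements merged into one kernel-verified Lean document; each statement's English description precedes it below -/
import Mathlib

section
/- Under the support assumption, the per-decision importance sampling estimator is unbiased: E_{τ∼p_{π_b}}[Σ_{t=1}^L γ^{t−1} ρ_{1:t} R_t] = J(π_e). -/
open Finset

variable {S A : Type*} [Fintype S] [Fintype A] [DecidableEq S] [DecidableEq A]
  [Inhabited S] [Inhabited A]

/-- Weight contributed by the `t`-th step of trajectory `τ` under initial
distribution `d1`, transition kernel `T` and policy `π` (`π s a = π(a|s)`,
`T s a s' = T(s'|s,a)`). -/
noncomputable def stepW (d1 : S → ℝ) (T : S → A → S → ℝ) (π : S → A → ℝ)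
    (τ : ℕ → S × A) : ℕ → ℝ
  | 0 => d1 (τ 0).1 * π (τ 0).1 (τ 0).2
  | t + 1 => T (τ t).1 (τ t).2 (τ (t + 1)).1 * π (τ (t + 1)).1 (τ (t + 1)).2

/-- Probability under `p_π` of the first `n` steps (times `0, …, n-1`) of `τ`. -/
noncomputable def preP (d1 : S → ℝ) (T : S → A → S → ℝ) (π : S → A → ℝ)
    (n : ℕ) (τ : ℕ → S × A) : ℝ :=
  ∏ t ∈ range n, stepW d1 T π τ t

/-- Extension of a length-`n` prefix to an infinite trajectory. -/
def extTraj {n : ℕ} (σ : Fin n → S × A) : ℕ → S × A :=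
  fun t => if h : t < n then σ ⟨t, h⟩ else default

/-- Expectation under `p_π` of a function depending only on the first `n` steps
of the trajectory. -/
noncomputable def expVal (d1 : S → ℝ) (T : S → A → S → ℝ) (π : S → A → ℝ)
    (n : ℕ) (f : (ℕ → S × A) → ℝ) : ℝ :=
  ∑ σ : Fin n → S × A, preP d1 T π n (extTraj σ) * f (extTraj σ)

/-- `d_t^π(s,a)`, the time-`t` state-action distribution (time is 0-indexed,
so `t = 0` is the paper's time `1`). -/
noncomputable def dSA (d1 : S → ℝ) (T : S → A → S → ℝ) (π : S → A → ℝ)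
    (t : ℕ) (s : S) (a : A) : ℝ :=
  expVal d1 T π (t + 1) (fun τ => if τ t = (s, a) then 1 else 0)

/-- Single-step likelihood ratio `ρ_t = π_e(A_t|S_t)/π_b(A_t|S_t)`
(0-indexed time). -/
noncomputable def rho (πb πe : S → A → ℝ) (τ : ℕ → S × A) (t : ℕ) : ℝ :=
  πe (τ t).1 (τ t).2 / πb (τ t).1 (τ t).2

/-- Conditional expectation under `p_π` given `(S_t, A_t) = (s, a)`, for a
function of the first `n` steps. -/
noncomputable def condExpSA (d1 : S → ℝ) (T : S → A → S → ℝ) (π : S → A → ℝ)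
    (n t : ℕ) (s : S) (a : A) (f : (ℕ → S × A) → ℝ) : ℝ :=
  expVal d1 T π n (fun τ => if τ t = (s, a) then f τ else 0) / dSA d1 T π t s a

/-- Averaged state-action distribution `d_{1:Th}^π` over the first `Th` steps
with discount `γ`. -/
noncomputable def dAvg (d1 : S → ℝ) (T : S → A → S → ℝ) (π : S → A → ℝ)
    (γ : ℝ) (Th : ℕ) (s : S) (a : A) : ℝ :=
  (∑ t ∈ range Th, γ ^ t * dSA d1 T π t s a) / (∑ t ∈ range Th, γ ^ t)

/-- Discounted average state-action occupancy `d^π` (infinite horizon),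
`d^π(s,a) = (1-γ) Σ_{t≥1} γ^{t-1} d_t^π(s,a)`. -/
noncomputable def dInf (d1 : S → ℝ) (T : S → A → S → ℝ) (π : S → A → ℝ)
    (γ : ℝ) (s : S) (a : A) : ℝ :=
  (1 - γ) * ∑' t : ℕ, γ ^ t * dSA d1 T π t s a

/-- Infinite-horizon value `J(π) = E_{p_π}[Σ_{t≥1} γ^{t-1} R_t]`. -/
noncomputable def Jinf (d1 : S → ℝ) (T : S → A → S → ℝ) (π : S → A → ℝ)
    (r : S → A → ℝ) (γ : ℝ) : ℝ :=
  ∑' t : ℕ, γ ^ t * expVal d1 T π (t + 1) (fun τ => r (τ t).1 (τ t).2)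

/-- Doubly-robust weight `w(m, n)` of the paper (`m` is the paper's 1-indexed
time, with `w(0, n) = 1`). -/
noncomputable def wDR (d1 : S → ℝ) (T : S → A → S → ℝ) (πb πe : S → A → ℝ)
    (γ : ℝ) (n : ℕ) (τ : ℕ → S × A) (m : ℕ) : ℝ :=
  if m = 0 then 1
  else if m ≤ n then ∏ j ∈ range m, rho πb πe τ j
  else (dInf d1 T πe γ (τ (m - n - 1)).1 (τ (m - n - 1)).2 /
        dInf d1 T πb γ (τ (m - n - 1)).1 (τ (m - n - 1)).2) *
      ∏ j ∈ Icc (m - n) (m - 1), rho πb πe τ j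

lemma stepW_congr (d1 : S → ℝ) (T : S → A → S → ℝ) (π : S → A → ℝ)
    {τ τ' : ℕ → S × A} {t : ℕ} (h : ∀ j ≤ t, τ j = τ' j) :
    stepW d1 T π τ t = stepW d1 T π τ' t := by
  cases t with
  | zero => simp [stepW, h 0 le_rfl]
  | succ t => simp [stepW, h t (Nat.le_succ t), h (t+1) le_rfl]

lemma extTraj_snoc_lt {m : ℕ} (p : Fin m → S × A) (x : S × A) {j : ℕ} (hj : j < m) :
    extTraj (Fin.snoc p x) j = extTraj p j := by
  simp only [extTraj, dif_pos hj, dif_pos (Nat.lt_succ_of_lt hj)]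
  have : (⟨j, Nat.lt_succ_of_lt hj⟩ : Fin (m+1)) = Fin.castSucc ⟨j, hj⟩ := rfl
  rw [this, Fin.snoc_castSucc]

lemma extTraj_snoc_last {m : ℕ} (p : Fin m → S × A) (x : S × A) :
    extTraj (Fin.snoc p x) m = x := by
  simp only [extTraj, dif_pos (Nat.lt_succ_self m)]
  have : (⟨m, Nat.lt_succ_self m⟩ : Fin (m+1)) = Fin.last m := rfl
  rw [this, Fin.snoc_last]

lemma expVal_succ (d1 : S → ℝ) (T : S → A → S → ℝ) (π : S → A → ℝ)
    (hd1sum : ∑ s, d1 s = 1) (hTsum : ∀ s a, ∑ s', T s a s' = 1)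
    (hπsum : ∀ s, ∑ a, π s a = 1)
    (m : ℕ) (f : (ℕ → S × A) → ℝ)
    (hf : ∀ τ τ' : ℕ → S × A, (∀ t < m, τ t = τ' t) → f τ = f τ') :
    expVal d1 T π (m + 1) f = expVal d1 T π m f := by
  unfold expVal
  rw [← (Fin.snocEquiv (fun _ : Fin (m+1) => S × A)).sum_comp
    (fun σ => preP d1 T π (m+1) (extTraj σ) * f (extTraj σ))]
  rw [Fintype.sum_prod_type]
  rw [Finset.sum_comm]
  refine Finset.sum_congr rfl fun p _ => ?_
  have hs : ∀ x : S × A,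
      (Fin.snocEquiv (fun _ : Fin (m+1) => S × A)) (x, p) = Fin.snoc p x := fun x => rfl
  have key : ∀ x : S × A,
      preP d1 T π (m+1) (extTraj (Fin.snoc p x)) * f (extTraj (Fin.snoc p x))
        = (preP d1 T π m (extTraj p) * f (extTraj p)) * stepW d1 T π (extTraj (Fin.snoc p x)) m := by
    intro x
    have hagree : ∀ j < m, extTraj (Fin.snoc p x) j = extTraj p j :=
      fun j hj => extTraj_snoc_lt p x hj
    have h1 : preP d1 T π (m+1) (extTraj (Fin.snoc p x))
        = preP d1 T π m (extTraj p) * stepW d1 T π (extTraj (Fin.snoc p x)) m := by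
      unfold preP
      rw [Finset.prod_range_succ]
      congr 1
      refine Finset.prod_congr rfl fun j hj => ?_
      exact stepW_congr d1 T π fun i hi =>
        hagree i (lt_of_le_of_lt hi (Finset.mem_range.mp hj))
    rw [h1, hf _ _ hagree]
    ring
  calc ∑ x : S × A, preP d1 T π (m+1)
          (extTraj ((Fin.snocEquiv (fun _ : Fin (m+1) => S × A)) (x, p)))
          * f (extTraj ((Fin.snocEquiv (fun _ : Fin (m+1) => S × A)) (x, p)))
      = ∑ x : S × A, (preP d1 T π m (extTraj p) * f (extTraj p))
          * stepW d1 T π (extTraj (Fin.snoc p x)) m := by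
        refine Finset.sum_congr rfl fun x _ => ?_
        rw [hs x, key x]
    _ = preP d1 T π m (extTraj p) * f (extTraj p) := by
        rw [← Finset.mul_sum]
        have : ∑ x : S × A, stepW d1 T π (extTraj (Fin.snoc p x)) m = 1 := by
          cases m with
          | zero =>
            rw [Fintype.sum_prod_type]
            have : ∀ x : S × A, stepW d1 T π (extTraj (Fin.snoc p x)) 0
                = d1 x.1 * π x.1 x.2 := by
              intro x; simp [stepW, extTraj_snoc_last]
            simp only [this]
            simp [← Finset.mul_sum, hπsum, hd1sum]
          | succ j =>
            rw [Fintype.sum_prod_type]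
            have : ∀ x : S × A, stepW d1 T π (extTraj (Fin.snoc p x)) (j+1)
                = T (extTraj p j).1 (extTraj p j).2 x.1 * π x.1 x.2 := by
              intro x
              simp only [stepW]
              rw [extTraj_snoc_last, extTraj_snoc_lt p x (Nat.lt_succ_self j)]
            simp only [this]
            simp [← Finset.mul_sum, hπsum, hTsum]
        rw [this, mul_one]

lemma expVal_shrink (d1 : S → ℝ) (T : S → A → S → ℝ) (π : S → A → ℝ)
    (hd1sum : ∑ s, d1 s = 1) (hTsum : ∀ s a, ∑ s', T s a s' = 1)
    (hπsum : ∀ s, ∑ a, π s a = 1)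
    (n m : ℕ) (hnm : n ≤ m) (f : (ℕ → S × A) → ℝ)
    (hf : ∀ τ τ' : ℕ → S × A, (∀ t < n, τ t = τ' t) → f τ = f τ') :
    expVal d1 T π m f = expVal d1 T π n f := by
  induction m with
  | zero =>
    have : n = 0 := Nat.le_zero.mp hnm
    rw [this]
  | succ m ih =>
    rcases Nat.lt_or_ge n (m+1) with h | h
    · have hm : n ≤ m := Nat.lt_succ_iff.mp h
      rw [expVal_succ d1 T π hd1sum hTsum hπsum m f
        (fun τ τ' ha => hf τ τ' fun t ht => ha t (lt_of_lt_of_le ht hm)), ih hm]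
    · have : n = m + 1 := le_antisymm hnm h
      rw [this]

lemma preP_mul_rho (d1 : S → ℝ) (T : S → A → S → ℝ) (πb πe : S → A → ℝ)
    (hπe : ∀ s a, 0 ≤ πe s a)
    (hsupp : ∀ s a, 0 < πe s a → 0 < πb s a)
    (t : ℕ) (τ : ℕ → S × A) :
    preP d1 T πb (t + 1) τ * ∏ j ∈ range (t + 1), rho πb πe τ j
      = preP d1 T πe (t + 1) τ := by
  unfold preP
  rw [← Finset.prod_mul_distrib]
  refine Finset.prod_congr rfl fun j _ => ?_
  have key : ∀ (c : ℝ), c * πb (τ j).1 (τ j).2 * rho πb πe τ j = c * πe (τ j).1 (τ j).2 := by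
    intro c
    unfold rho
    by_cases hb : πb (τ j).1 (τ j).2 = 0
    · have he : πe (τ j).1 (τ j).2 = 0 := by
        by_contra h
        exact (ne_of_gt (hsupp (τ j).1 (τ j).2
          (lt_of_le_of_ne (hπe _ _) (Ne.symm h)))).symm hb.symm
      rw [hb, he]; ring
    · field_simp
  cases j with
  | zero => exact key (d1 (τ 0).1)
  | succ i => exact key (T (τ i).1 (τ i).2 (τ (i+1)).1)

lemma expVal_sum (d1 : S → ℝ) (T : S → A → S → ℝ) (π : S → A → ℝ)
    (n : ℕ) {ι : Type*} (u : Finset ι) (g : ι → (ℕ → S × A) → ℝ) :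
    expVal d1 T π n (fun τ => ∑ t ∈ u, g t τ) = ∑ t ∈ u, expVal d1 T π n (g t) := by
  unfold expVal
  simp only [Finset.mul_sum]
  rw [Finset.sum_comm]

/-- the per-decision importance sampling estimator is unbiased:
`E_{τ∼p_πb}[Σ_t γ^(t-1) ρ_(1:t) R_t] = J(π_e)`. -/
theorem pdis_unbiased
    (d1 : S → ℝ) (T : S → A → S → ℝ) (πb πe : S → A → ℝ) (r : S → A → ℝ)
    (γ : ℝ) (L : ℕ) (hL : 0 < L)
    (hd1 : ∀ s, 0 ≤ d1 s) (hd1sum : ∑ s, d1 s = 1)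
    (hT : ∀ s a s', 0 ≤ T s a s') (hTsum : ∀ s a, ∑ s', T s a s' = 1)
    (hπb : ∀ s a, 0 ≤ πb s a) (hπbsum : ∀ s, ∑ a, πb s a = 1)
    (hπe : ∀ s a, 0 ≤ πe s a) (hπesum : ∀ s, ∑ a, πe s a = 1)
    (hγ0 : 0 ≤ γ) (hγ1 : γ < 1)
    (hsupp : ∀ s a, 0 < πe s a → 0 < πb s a) :
    expVal d1 T πb L (fun τ =>
        ∑ t ∈ range L, γ ^ t * (∏ j ∈ range (t + 1), rho πb πe τ j) * r (τ t).1 (τ t).2)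
      = expVal d1 T πe L (fun τ => ∑ t ∈ range L, γ ^ t * r (τ t).1 (τ t).2) := by
  rw [expVal_sum, expVal_sum]
  refine Finset.sum_congr rfl fun t ht => ?_
  have htL : t + 1 ≤ L := Finset.mem_range.mp ht
  have hcongr1 : ∀ τ τ' : ℕ → S × A, (∀ j < t + 1, τ j = τ' j) →
      γ ^ t * (∏ j ∈ range (t + 1), rho πb πe τ j) * r (τ t).1 (τ t).2
        = γ ^ t * (∏ j ∈ range (t + 1), rho πb πe τ' j) * r (τ' t).1 (τ' t).2 := by
    intro τ τ' h
    rw [h t (Nat.lt_succ_self t)]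
    congr 2
    refine Finset.prod_congr rfl fun j hj => ?_
    unfold rho
    rw [h j (Finset.mem_range.mp hj)]
  have hcongr2 : ∀ τ τ' : ℕ → S × A, (∀ j < t + 1, τ j = τ' j) →
      γ ^ t * r (τ t).1 (τ t).2 = γ ^ t * r (τ' t).1 (τ' t).2 := by
    intro τ τ' h
    rw [h t (Nat.lt_succ_self t)]
  rw [expVal_shrink d1 T πb hd1sum hTsum hπbsum (t+1) L htL _ hcongr1,
      expVal_shrink d1 T πe hd1sum hTsum hπesum (t+1) L htL _ hcongr2]
  unfold expVal
  refine Finset.sum_congr rfl fun σ _ => ?_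
  have := preP_mul_rho d1 T πb πe hπe hsupp t (extTraj σ)
  calc preP d1 T πb (t+1) (extTraj σ) *
        (γ ^ t * (∏ j ∈ range (t + 1), rho πb πe (extTraj σ) j) * r ((extTraj σ) t).1 ((extTraj σ) t).2)
      = (preP d1 T πb (t+1) (extTraj σ) * ∏ j ∈ range (t + 1), rho πb πe (extTraj σ) j)
          * (γ ^ t * r ((extTraj σ) t).1 ((extTraj σ) t).2) := by ring
    _ = preP d1 T πe (t+1) (extTraj σ) * (γ ^ t * r ((extTraj σ) t).1 ((extTraj σ) t).2) := by
        rw [this]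
end

section
/- (Proposition 1.) Under the support assumption, for every time t with 1 ≤ t ≤ L and every state-action pair (s,a) with d_t^{π_b}(s,a) > 0, the conditional expectation of the cumulative likelihood ratio satisfies E_{τ∼p_{π_b}}[ρ_{1:t} | S_t = s, A_t = a] = d_t^{π_e}(s,a)/d_t^{π_b}(s,a). -/
open Finset

variable {S A : Type*} [Fintype S] [Fintype A] [DecidableEq S] [DecidableEq A]
  [Inhabited S] [Inhabited A]

lemma stepW_mul_rho (d1 : S → ℝ) (T : S → A → S → ℝ) (πb πe : S → A → ℝ)
    (hπe : ∀ s a, 0 ≤ πe s a) (hsupp : ∀ s a, 0 < πe s a → 0 < πb s a)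
    (τ : ℕ → S × A) (j : ℕ) :
    stepW d1 T πb τ j * rho πb πe τ j = stepW d1 T πe τ j := by
  have key : ∀ (c : ℝ) (x : S) (y : A),
      c * πb x y * (πe x y / πb x y) = c * πe x y := by
    intro c x y
    rcases eq_or_ne (πb x y) 0 with h | h
    · have he : πe x y = 0 := by
        by_contra hne
        have := hsupp x y (lt_of_le_of_ne (hπe x y) (Ne.symm hne))
        rw [h] at this; exact lt_irrefl 0 this
      simp [h, he]
    · field_simp
  cases j with
  | zero => simpa [stepW, rho] using key (d1 (τ 0).1) (τ 0).1 (τ 0).2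
  | succ n =>
      simpa [stepW, rho] using
        key (T (τ n).1 (τ n).2 (τ (n+1)).1) (τ (n+1)).1 (τ (n+1)).2

lemma preP_mul_prod_rho (d1 : S → ℝ) (T : S → A → S → ℝ) (πb πe : S → A → ℝ)
    (hπe : ∀ s a, 0 ≤ πe s a) (hsupp : ∀ s a, 0 < πe s a → 0 < πb s a)
    (n : ℕ) (τ : ℕ → S × A) :
    preP d1 T πb n τ * ∏ j ∈ range n, rho πb πe τ j = preP d1 T πe n τ := by
  unfold preP
  rw [← Finset.prod_mul_distrib]
  exact Finset.prod_congr rfl fun j _ => stepW_mul_rho d1 T πb πe hπe hsupp τ j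

/-- Proposition 1: for every time `t` (0-indexed, so time `t+1`
of the paper, `1 ≤ t+1 ≤ L`) and every `(s,a)` with `d_t^πb(s,a) > 0`,
`E_{τ∼p_πb}[ρ_(1:t) | S_t = s, A_t = a] = d_t^πe(s,a)/d_t^πb(s,a)`. -/
theorem prop1_cond_ratio
    (d1 : S → ℝ) (T : S → A → S → ℝ) (πb πe : S → A → ℝ)
    (L t : ℕ) (ht : t < L) (s : S) (a : A)
    (hd1 : ∀ s, 0 ≤ d1 s) (hd1sum : ∑ s, d1 s = 1)
    (hT : ∀ s a s', 0 ≤ T s a s') (hTsum : ∀ s a, ∑ s', T s a s' = 1)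
    (hπb : ∀ s a, 0 ≤ πb s a) (hπbsum : ∀ s, ∑ a, πb s a = 1)
    (hπe : ∀ s a, 0 ≤ πe s a) (hπesum : ∀ s, ∑ a, πe s a = 1)
    (hsupp : ∀ s a, 0 < πe s a → 0 < πb s a)
    (hpos : 0 < dSA d1 T πb t s a) :
    condExpSA d1 T πb (t + 1) t s a (fun τ => ∏ j ∈ range (t + 1), rho πb πe τ j)
      = dSA d1 T πe t s a / dSA d1 T πb t s a := by
  unfold condExpSA
  congr 1
  unfold dSA expVal
  refine Finset.sum_congr rfl fun σ _ => ?_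
  by_cases h : extTraj σ t = (s, a)
  · have := preP_mul_prod_rho d1 T πb πe hπe hsupp (t + 1) (extTraj σ)
    simp [h, this]
  · simp [h]
end
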